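/- arXiv:2604.02491 — 8 statements merged into one kernel-verified Lean document; each statement's English description precedes it below -/
import Mathlib

section
/- Let α ∈ (0, π/2) and r ∈ [0, 1]. If α ≤ π/4 then (1/2)·√((1+r)²·cot²α + (1−r)²) ≥ cos α. -/
open Real

theorem apex_dist_ge_cos (α r : ℝ) (hα : α ∈ Set.Ioo 0 (π/2)) (hr : r ∈ Set.Icc (0:ℝ) 1)
    (hle : α ≤ π/4) :
    (1/2) * Real.sqrt ((1+r)^2 * (Real.cot α)^2 + (1-r)^2) ≥ Real.cos α := by
  obtain ⟨h0, h2⟩ := hα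
  have hs : Real.sin α > 0 := Real.sin_pos_of_pos_of_lt_pi h0 (lt_trans h2 (by linarith [Real.pi_pos]))
  have hc : Real.cos α > 0 := Real.cos_pos_of_mem_Ioo ⟨by linarith [Real.pi_pos], h2⟩
  have hkey : (Real.cot α)^2 * (Real.sin α)^2 = (Real.cos α)^2 := by
    rw [Real.cot_eq_cos_div_sin]
    field_simp
  have hpyth := Real.sin_sq_add_cos_sq α
  have hmain : (2 * Real.cos α)^2 ≤ (1+r)^2 * (Real.cot α)^2 + (1-r)^2 := by
    nlinarith [sq_nonneg ((Real.cot α)^2 * (1+r) - (1-r)), sq_nonneg (Real.sin α),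
      sq_nonneg (Real.cot α), sq_nonneg (Real.cot α * (1+r)), hr.1, hr.2,
      sq_nonneg ((Real.cot α)^2 * (1+r) * Real.sin α - (1-r) * Real.sin α)]
  have h2c : (0:ℝ) ≤ 2 * Real.cos α := by linarith
  have := (Real.le_sqrt h2c (by positivity)).mpr hmain
  linarith
end

section
/- Define A = 2·tan β/(tan α + tan β) and B = 2·cos(2α). Then for all α ∈ (0, π/2) and β ∈ [0, α], 2 − A·B ≥ 0. -/
open Real

theorem two_sub_AB_nonneg (α β : ℝ) (hα : α ∈ Set.Ioo 0 (π/2)) (hβ : β ∈ Set.Icc 0 α) :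
    2 - (2 * Real.tan β / (Real.tan α + Real.tan β)) * (2 * Real.cos (2*α)) ≥ 0 := by
  obtain ⟨hα0, hα2⟩ := hα
  obtain ⟨hβ0, hβα⟩ := hβ
  have ht : 0 < Real.tan α := Real.tan_pos_of_pos_of_lt_pi_div_two hα0 hα2
  have hs : 0 ≤ Real.tan β :=
    Real.tan_nonneg_of_nonneg_of_le_pi_div_two hβ0 (le_of_lt (lt_of_le_of_lt hβα hα2))
  have hst : Real.tan β ≤ Real.tan α := by
    rcases eq_or_lt_of_le hβα with h | h
    · rw [h]
    · exact le_of_lt (Real.tan_lt_tan_of_nonneg_of_lt_pi_div_two hβ0 hα2 h)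
  have hc : Real.cos (2*α) ≤ 1 := Real.cos_le_one _
  have hden : 0 < Real.tan α + Real.tan β := by linarith
  rw [ge_iff_le, sub_nonneg, div_mul_eq_mul_div, div_le_iff₀ hden]
  nlinarith [mul_le_of_le_one_right hs hc]
end

section
/- Define A = 2·tan β/(tan α + tan β) and B = 2·cos(2α). Then for all α ∈ (0, π/2) and β ∈ (0, α], (2 − A·B) − (2·A − B) = 4·cos²(α)·sin(α−β)/sin(α+β) ≥ 0; consequently r₀ := (2A − B)/(2 − A·B) ≤ 1. -/
open Real

theorem r0_le_one (α β : ℝ) (hα : α ∈ Set.Ioo 0 (π/2)) (hβ : β ∈ Set.Ioc 0 α) :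
    (2 - (2 * Real.tan β / (Real.tan α + Real.tan β)) * (2 * Real.cos (2*α)))
      - (2 * (2 * Real.tan β / (Real.tan α + Real.tan β)) - 2 * Real.cos (2*α))
      = 4 * (Real.cos α)^2 * Real.sin (α - β) / Real.sin (α + β) ∧
    4 * (Real.cos α)^2 * Real.sin (α - β) / Real.sin (α + β) ≥ 0 ∧
    (2 * (2 * Real.tan β / (Real.tan α + Real.tan β)) - 2 * Real.cos (2*α))
      / (2 - (2 * Real.tan β / (Real.tan α + Real.tan β)) * (2 * Real.cos (2*α))) ≤ 1 := by
  obtain ⟨hα0, hα2⟩ := hα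
  obtain ⟨hβ0, hβα⟩ := hβ
  have hpi := Real.pi_pos
  have hca : Real.cos α > 0 := Real.cos_pos_of_mem_Ioo ⟨by linarith, hα2⟩
  have hcb : Real.cos β > 0 := Real.cos_pos_of_mem_Ioo ⟨by linarith, by linarith⟩
  have hsa : Real.sin α > 0 := Real.sin_pos_of_pos_of_lt_pi hα0 (by linarith)
  have hsb : Real.sin β > 0 := Real.sin_pos_of_pos_of_lt_pi hβ0 (by linarith)
  have hsab : Real.sin (α + β) > 0 :=
    Real.sin_pos_of_pos_of_lt_pi (by linarith) (by linarith)
  have hsmb : Real.sin (α - β) ≥ 0 :=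
    Real.sin_nonneg_of_nonneg_of_le_pi (by linarith) (by linarith)
  have htan : Real.tan α + Real.tan β = Real.sin (α + β) / (Real.cos α * Real.cos β) := by
    rw [Real.tan_eq_sin_div_cos, Real.tan_eq_sin_div_cos, Real.sin_add]
    field_simp
  have hA : 2 * Real.tan β / (Real.tan α + Real.tan β)
      = 2 * Real.sin β * Real.cos α / Real.sin (α + β) := by
    rw [htan, Real.tan_eq_sin_div_cos]
    field_simp
  have heq : (2 - (2 * Real.tan β / (Real.tan α + Real.tan β)) * (2 * Real.cos (2*α)))
      - (2 * (2 * Real.tan β / (Real.tan α + Real.tan β)) - 2 * Real.cos (2*α))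
      = 4 * (Real.cos α)^2 * Real.sin (α - β) / Real.sin (α + β) := by
    rw [hA, Real.cos_two_mul, Real.sin_sub]
    rw [show Real.sin (α + β) = Real.sin α * Real.cos β + Real.cos α * Real.sin β from
      Real.sin_add α β]
    field_simp
    ring
  have hnn : 4 * (Real.cos α)^2 * Real.sin (α - β) / Real.sin (α + β) ≥ 0 := by
    apply div_nonneg _ hsab.le
    positivity
  refine ⟨heq, hnn, ?_⟩
  have hApos : 2 * Real.tan β / (Real.tan α + Real.tan β) > 0 := by
    rw [hA]; positivity
  have hAle : 2 * Real.tan β / (Real.tan α + Real.tan β) ≤ 1 := by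
    rw [hA, div_le_one hsab]
    have : Real.sin (α + β) - 2 * Real.sin β * Real.cos α = Real.sin (α - β) := by
      rw [Real.sin_add, Real.sin_sub]; ring
    linarith
  have hB2 : 2 * Real.cos (2*α) < 2 := by
    rw [Real.cos_two_mul]
    nlinarith [Real.sin_sq_add_cos_sq α]
  have hden : 0 < 2 - (2 * Real.tan β / (Real.tan α + Real.tan β)) * (2 * Real.cos (2*α)) := by
    nlinarith [mul_lt_mul_of_pos_left hB2 hApos]
  rw [div_le_one hden]
  linarith
end

section
/- For all α ∈ [0, π/6] and β ∈ [0, α], sin α·cos β + cos α·(1 − 2·cos(2α))·sin β ≥ sin α·cos α·(1 − (2·cos(2α) − 1)) ≥ 0; moreover for α ∈ [π/6, π/2] each summand is non-negative, so the expression is non-negative for all α ∈ [0, π/2] and β ∈ [0, α]. -/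
open Real

theorem denominator_nonneg (α β : ℝ) (hα : α ∈ Set.Icc 0 (π/2)) (hβ : β ∈ Set.Icc 0 α) :
    (α ≤ π/6 →
      Real.sin α * Real.cos β + Real.cos α * (1 - 2 * Real.cos (2*α)) * Real.sin β
        ≥ Real.sin α * Real.cos α * (1 - (2 * Real.cos (2*α) - 1)) ∧
      Real.sin α * Real.cos α * (1 - (2 * Real.cos (2*α) - 1)) ≥ 0) ∧
    Real.sin α * Real.cos β + Real.cos α * (1 - 2 * Real.cos (2*α)) * Real.sin β ≥ 0 := by
  obtain ⟨hα0, hα2⟩ := hα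
  obtain ⟨hβ0, hβα⟩ := hβ
  have hpi := Real.pi_pos
  have hαπ : α ≤ π := by linarith
  have hsinα : 0 ≤ Real.sin α := Real.sin_nonneg_of_nonneg_of_le_pi hα0 hαπ
  have hsinβ : 0 ≤ Real.sin β := Real.sin_nonneg_of_nonneg_of_le_pi hβ0 (by linarith)
  have hcosα : 0 ≤ Real.cos α := Real.cos_nonneg_of_mem_Icc ⟨by linarith, hα2⟩
  have hcosβα : Real.cos α ≤ Real.cos β :=
    Real.cos_le_cos_of_nonneg_of_le_pi hβ0 hαπ hβα
  have hsinβα : Real.sin β ≤ Real.sin α := by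
    apply Real.sin_le_sin_of_le_of_le_pi_div_two (by linarith) hα2 hβα
  have hc2le : Real.cos (2*α) ≤ 1 := Real.cos_le_one _
  have key : α ≤ π/6 →
      Real.sin α * Real.cos β + Real.cos α * (1 - 2 * Real.cos (2*α)) * Real.sin β
        ≥ Real.sin α * Real.cos α * (1 - (2 * Real.cos (2*α) - 1)) ∧
      Real.sin α * Real.cos α * (1 - (2 * Real.cos (2*α) - 1)) ≥ 0 := by
    intro h6
    have hc2 : (1:ℝ)/2 ≤ Real.cos (2*α) := by
      have := Real.cos_le_cos_of_nonneg_of_le_pi (by linarith) (by linarith) (by linarith : 2*α ≤ π/3)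
      rwa [Real.cos_pi_div_three] at this
    constructor
    · nlinarith [mul_le_mul_of_nonneg_left hcosβα hsinα,
        mul_le_mul_of_nonneg_right hsinβα (show (0:ℝ) ≤ 2 * Real.cos (2*α) - 1 by linarith),
        mul_le_mul_of_nonneg_left (mul_le_mul_of_nonneg_right hsinβα (show (0:ℝ) ≤ 2 * Real.cos (2*α) - 1 by linarith)) hcosα]
    · nlinarith [mul_nonneg hsinα hcosα]
  refine ⟨key, ?_⟩
  by_cases h6 : α ≤ π/6
  · have := key h6
    nlinarith [this.1, this.2]
  · push_neg at h6
    have hc2 : Real.cos (2*α) ≤ 1/2 := by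
      have := Real.cos_le_cos_of_nonneg_of_le_pi (by linarith) (by linarith) (by linarith : π/3 ≤ 2*α)
      rwa [Real.cos_pi_div_three] at this
    have hcosβ : 0 ≤ Real.cos β := Real.cos_nonneg_of_mem_Icc ⟨by linarith, by linarith⟩
    nlinarith [mul_nonneg hsinα hcosβ, mul_nonneg (mul_nonneg hcosα (by linarith : (0:ℝ) ≤ 1 - 2 * Real.cos (2*α))) hsinβ]
end

section
/- For all α ∈ (0, π/4], tan(β₀(α)) − tan(t(α)) = 2·tan α / (7 − 7·cos(2α) + cos(4α)) ≥ 0, where tan(β₀(α)) = sin(3α)/(2·cos α − cos(3α)) and tan(t(α)) = (sin(3α) − sin α)/(3·cos α − cos(3α)). Hence β₀(α) ≥ t(α). -/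
/-!
The `arccos` argument defining `β₀` equals `(1 - r²) / (1 + r²)` with
`r = sin 3α / (2 cos α - cos 3α) ≥ 0`, so the half-angle formula gives `β₀ = arctan r`.
In terms of `c = cos α` one has `7 - 7 cos 2α + cos 4α = (5 - 4c²)(3 - 2c²) > 0`, so the
difference of the two tangents is nonnegative and monotonicity of `arctan` gives `β₀ ≥ t`.
-/

open Real

theorem one_sub_sq_div_one_add_sq_of_div {p q : ℝ} (hq : q ≠ 0) :
    (1 - (p / q) ^ 2) / (1 + (p / q) ^ 2) = (q ^ 2 - p ^ 2) / (q ^ 2 + p ^ 2) := by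
  field_simp

namespace Real

theorem arccos_one_sub_sq_div_one_add_sq {x : ℝ} (hx : 0 ≤ x) :
    arccos ((1 - x ^ 2) / (1 + x ^ 2)) = 2 * arctan x := by
  have hcos : cos (2 * arctan x) = (1 - x ^ 2) / (1 + x ^ 2) := by
    rw [cos_two_mul, cos_sq_arctan]
    field_simp
    ring
  rw [← hcos, arccos_cos (by linarith [arctan_nonneg.2 hx])
    (by linarith [arctan_lt_pi_div_two x])]

theorem two_mul_cos_sub_cos_three_mul (x : ℝ) :
    2 * cos x - cos (3 * x) = cos x * (5 - 4 * cos x ^ 2) := by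
  rw [cos_three_mul]; ring

theorem three_mul_cos_sub_cos_three_mul (x : ℝ) :
    3 * cos x - cos (3 * x) = 2 * cos x * (3 - 2 * cos x ^ 2) := by
  rw [cos_three_mul]; ring

theorem cos_four_mul (x : ℝ) : cos (4 * x) = 8 * cos x ^ 4 - 8 * cos x ^ 2 + 1 := by
  rw [show 4 * x = 2 * (2 * x) by ring, cos_two_mul, cos_two_mul]; ring

theorem cos_six_mul (x : ℝ) :
    cos (6 * x) = 32 * cos x ^ 6 - 48 * cos x ^ 4 + 18 * cos x ^ 2 - 1 := by
  rw [show 6 * x = 3 * (2 * x) by ring, cos_three_mul, cos_two_mul]; ring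

theorem seven_sub_seven_mul_cos_two_mul_add_cos_four_mul (x : ℝ) :
    7 - 7 * cos (2 * x) + cos (4 * x) = (5 - 4 * cos x ^ 2) * (3 - 2 * cos x ^ 2) := by
  rw [cos_four_mul, cos_two_mul]; ring

theorem sin_three_mul_eq_sin_mul (x : ℝ) : sin (3 * x) = sin x * (4 * cos x ^ 2 - 1) := by
  rw [sin_three_mul]; linear_combination (-4 * sin x) * sin_sq_add_cos_sq x

theorem five_sub_four_mul_cos_sq_pos (x : ℝ) : 0 < 5 - 4 * cos x ^ 2 := by
  nlinarith [cos_sq_le_one x]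

theorem three_sub_two_mul_cos_sq_pos (x : ℝ) : 0 < 3 - 2 * cos x ^ 2 := by
  nlinarith [cos_sq_le_one x]

end Real

section HedgeAngle

variable {α : ℝ}

theorem hedge_arccos_arg_eq_one_sub_sq_div_one_add_sq (hc : cos α ≠ 0) :
    (-2 * cos (4 * α) + cos (6 * α) + 2) / (3 - 2 * cos (4 * α)) =
      (1 - (sin (3 * α) / (2 * cos α - cos (3 * α))) ^ 2) /
        (1 + (sin (3 * α) / (2 * cos α - cos (3 * α))) ^ 2) := by
  have hq : 2 * cos α - cos (3 * α) ≠ 0 := by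
    rw [two_mul_cos_sub_cos_three_mul]
    exact mul_ne_zero hc (five_sub_four_mul_cos_sq_pos α).ne'
  rw [one_sub_sq_div_one_add_sq_of_div hq, two_mul_cos_sub_cos_three_mul,
    sin_three_mul_eq_sin_mul, mul_pow, mul_pow, sin_sq, cos_four_mul, cos_six_mul]
  congr 1 <;> ring

theorem tan_hedge_sub_tan_threshold (hc : cos α ≠ 0) :
    sin (3 * α) / (2 * cos α - cos (3 * α)) -
        (sin (3 * α) - sin α) / (3 * cos α - cos (3 * α)) =
      2 * tan α / (7 - 7 * cos (2 * α) + cos (4 * α)) := by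
  have h5 := (five_sub_four_mul_cos_sq_pos α).ne'
  have h3 := (three_sub_two_mul_cos_sq_pos α).ne'
  rw [two_mul_cos_sub_cos_three_mul, three_mul_cos_sub_cos_three_mul,
    seven_sub_seven_mul_cos_two_mul_add_cos_four_mul, sin_three_mul_eq_sin_mul, tan_eq_sin_div_cos,
    div_sub_div _ _ (mul_ne_zero hc h5) (mul_ne_zero (mul_ne_zero two_ne_zero hc) h3),
    mul_div_assoc', div_div,
    div_eq_div_iff (by positivity) (by positivity)]
  ring

end HedgeAngle

theorem beta0_ge_t (α : ℝ) (hα : α ∈ Set.Ioc 0 (π/4)) :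
    let β₀ := (1/2) * Real.arccos ((-2 * Real.cos (4*α) + Real.cos (6*α) + 2)
      / (3 - 2 * Real.cos (4*α)))
    let t := Real.arctan ((Real.sin (3*α) - Real.sin α)
      / (3 * Real.cos α - Real.cos (3*α)))
    Real.tan β₀ = Real.sin (3*α) / (2 * Real.cos α - Real.cos (3*α)) ∧
    Real.tan t = (Real.sin (3*α) - Real.sin α) / (3 * Real.cos α - Real.cos (3*α)) ∧
    Real.tan β₀ - Real.tan t = 2 * Real.tan α / (7 - 7 * Real.cos (2*α) + Real.cos (4*α)) ∧
    2 * Real.tan α / (7 - 7 * Real.cos (2*α) + Real.cos (4*α)) ≥ 0 ∧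
    β₀ ≥ t := by
  intro β₀ t
  obtain ⟨hα₀, hα₁⟩ := hα
  have hπ := pi_pos
  have hcos : 0 < cos α := cos_pos_of_mem_Ioo ⟨by linarith, by linarith⟩
  have hr : 0 ≤ sin (3 * α) / (2 * cos α - cos (3 * α)) := by
    rw [two_mul_cos_sub_cos_three_mul]
    exact div_nonneg (sin_nonneg_of_nonneg_of_le_pi (by linarith) (by linarith))
      (mul_pos hcos (five_sub_four_mul_cos_sq_pos α)).le
  have hβ₀ : β₀ = arctan (sin (3 * α) / (2 * cos α - cos (3 * α))) := by
    simp only [β₀]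
    rw [hedge_arccos_arg_eq_one_sub_sq_div_one_add_sq hcos.ne',
      arccos_one_sub_sq_div_one_add_sq hr]
    ring
  have htan_β₀ : tan β₀ = sin (3 * α) / (2 * cos α - cos (3 * α)) := by
    rw [hβ₀, tan_arctan]
  have htan_t : tan t = (sin (3 * α) - sin α) / (3 * cos α - cos (3 * α)) := tan_arctan _
  have hdiff : tan β₀ - tan t = 2 * tan α / (7 - 7 * cos (2 * α) + cos (4 * α)) := by
    rw [htan_β₀, htan_t, tan_hedge_sub_tan_threshold hcos.ne']
  have hdiff_nonneg : 2 * tan α / (7 - 7 * cos (2 * α) + cos (4 * α)) ≥ 0 := by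
    rw [seven_sub_seven_mul_cos_two_mul_add_cos_four_mul]
    exact div_nonneg
      (mul_nonneg zero_le_two (tan_nonneg_of_nonneg_of_le_pi_div_two hα₀.le (by linarith)))
      (mul_pos (five_sub_four_mul_cos_sq_pos α) (three_sub_two_mul_cos_sq_pos α)).le
  refine ⟨htan_β₀, htan_t, hdiff, hdiff_nonneg, ?_⟩
  rw [hβ₀]
  exact arctan_mono (by linarith)
end

section
/- Fix s > 1 and α ∈ (0, π/2). For the request sequence x₀ = 0, x_i = 2·(−s)^{i−1}, the apex of the feasibility cone of the first i+1 requests (i ≥ 2) is T_i = ((−s)^{i−2}·(1 − s), s^{i−2}·(1 + s)/tan α), and its distance from the origin is o_i = √(s^{2i−4}·(−4s + (1+s)²/sin²α)). -/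
/-!
The two extreme requests at stage `i` are `a = 2(-s)^(i-2)` and `b = -s a`. The apex of the
intersection of the cones over `a` and `b` lies above their midpoint `(a + b)/2` at height
`|b - a| / (2 tan α)`. For the distance, `(1 - s)² = (1 + s)² - 4s` and `1 + cot² α = 1 / sin² α`
turn the squared norm of the apex into the stated closed form.
-/

open Real

lemma two_mul_pow_add_two_mul_pow_succ_div_two (x : ℝ) (k : ℕ) :
    (2 * x ^ k + 2 * x ^ (k + 1)) / 2 = x ^ k * (1 + x) := by
  ring

lemma abs_two_mul_neg_pow_succ_sub {s : ℝ} (hs : 0 ≤ s) (k : ℕ) :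
    |2 * (-s) ^ (k + 1) - 2 * (-s) ^ k| = 2 * (s ^ k * (1 + s)) := by
  rw [show 2 * (-s) ^ (k + 1) - 2 * (-s) ^ k = -(2 * ((-s) ^ k * (1 + s))) by ring,
    abs_neg, abs_mul, abs_mul, abs_pow, abs_neg, abs_two, abs_of_nonneg hs,
    abs_of_nonneg (by linarith : (0 : ℝ) ≤ 1 + s)]

lemma one_add_one_div_tan_sq {x : ℝ} (hx : sin x ≠ 0) : 1 + 1 / tan x ^ 2 = 1 / sin x ^ 2 := by
  rw [tan_eq_sin_div_cos, div_pow, one_div_div]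
  field_simp
  exact sin_sq_add_cos_sq x

lemma one_sub_sq_add_sq_div_tan_sq (s : ℝ) {x : ℝ} (hx : sin x ≠ 0) :
    (1 - s) ^ 2 + (1 + s) ^ 2 / tan x ^ 2 = -4 * s + (1 + s) ^ 2 / sin x ^ 2 := by
  linear_combination (1 + s) ^ 2 * one_add_one_div_tan_sq hx

theorem adversary_cone_apex (s α : ℝ) (hs : 1 < s) (hα : α ∈ Set.Ioo 0 (π/2))
    (i : ℕ) (hi : 2 ≤ i) :
    ((2 * (-s)^(i-2) + 2 * (-s)^(i-1)) / 2 = (-s)^(i-2) * (1 - s) ∧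
      |2 * (-s)^(i-1) - 2 * (-s)^(i-2)| / (2 * Real.tan α)
        = s^(i-2) * (1 + s) / Real.tan α) ∧
    Real.sqrt (((-s)^(i-2) * (1 - s))^2 + (s^(i-2) * (1 + s) / Real.tan α)^2)
      = Real.sqrt (s^(2*i-4) * (-4*s + (1+s)^2 / (Real.sin α)^2)) := by
  obtain ⟨k, rfl⟩ : ∃ k, i = k + 2 := ⟨i - 2, by omega⟩
  rw [show k + 2 - 2 = k by omega, show k + 2 - 1 = k + 1 by omega,
    show 2 * (k + 2) - 4 = 2 * k by omega]
  have hsin : sin α ≠ 0 := (sin_pos_of_pos_of_lt_pi hα.1 (by linarith [hα.2, pi_pos])).ne'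
  refine ⟨⟨?_, ?_⟩, ?_⟩
  · rw [two_mul_pow_add_two_mul_pow_succ_div_two]
    ring
  · rw [abs_two_mul_neg_pow_succ_sub (by linarith) k, mul_div_mul_left _ _ two_ne_zero]
  · have hsq : ((-s) ^ k) ^ 2 = s ^ (2 * k) := by
      rw [← pow_mul, pow_mul', neg_sq, ← pow_mul', mul_comm]
    rw [← one_sub_sq_add_sq_div_tan_sq s hsin, mul_pow, hsq]
    congr 1
    ring
end

section
/- For α = π/4, the maximum over s ≥ 1 of f(s) = s·(1+s)·√(1 − cos(4α)) / √(2·(1 + s⁴) − 4·s²·cos(4α)) equals (1 + √2)/2, attained at s = 1 + √2. -/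
open Real

lemma key_simp (s : ℝ) :
    s * (1+s) * Real.sqrt (1 - Real.cos (4*(π/4)))
        / Real.sqrt (2 * (1 + s^4) - 4 * s^2 * Real.cos (4*(π/4)))
      = s * (1+s) / (1 + s^2) := by
  have h4 : (4:ℝ) * (π/4) = π := by ring
  rw [h4, Real.cos_pi]
  have h1 : (1:ℝ) - (-1) = 2 := by norm_num
  have h2 : 2 * (1 + s^4) - 4 * s^2 * (-1) = 2 * (1 + s^2)^2 := by ring
  rw [h1, h2]
  have hs : (0:ℝ) ≤ 1 + s^2 := by positivity
  rw [show (2:ℝ) * (1 + s^2)^2 = ((1+s^2))^2 * 2 by ring,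
    Real.sqrt_mul (by positivity), Real.sqrt_sq hs]
  have hsp : (0:ℝ) < Real.sqrt 2 := by positivity
  rw [mul_comm (1+s^2) (Real.sqrt 2), ← div_div,
    mul_div_assoc, div_self (ne_of_gt hsp), mul_one]

theorem lower_bound_max_at_pi_div_four :
    (∀ s : ℝ, 1 ≤ s →
      s * (1+s) * Real.sqrt (1 - Real.cos (4*(π/4)))
        / Real.sqrt (2 * (1 + s^4) - 4 * s^2 * Real.cos (4*(π/4)))
        ≤ (1 + Real.sqrt 2) / 2) ∧
    (1 + Real.sqrt 2) * (1 + (1 + Real.sqrt 2)) * Real.sqrt (1 - Real.cos (4*(π/4)))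
        / Real.sqrt (2 * (1 + (1 + Real.sqrt 2)^4)
          - 4 * (1 + Real.sqrt 2)^2 * Real.cos (4*(π/4)))
      = (1 + Real.sqrt 2) / 2 := by
  have hsqrt2 : Real.sqrt 2 ^ 2 = 2 := Real.sq_sqrt (by norm_num)
  have hs2 : (1:ℝ) ≤ Real.sqrt 2 := by
    nlinarith [Real.sqrt_nonneg 2]
  constructor
  · intro s hs
    rw [key_simp s]
    rw [div_le_div_iff₀ (by positivity) (by norm_num)]
    nlinarith [sq_nonneg (s - (1 + Real.sqrt 2)), Real.sqrt_nonneg 2]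
  · rw [key_simp (1 + Real.sqrt 2)]
    rw [div_eq_div_iff (by positivity) (by norm_num)]
    nlinarith [Real.sqrt_nonneg 2]
end

section
/- For every α ∈ (0, π/4] and s > 1, the polynomial p(s) = s⁴ + 2·s³·cos(4α) − 2s − 1 has exactly one root in [1, ∞). -/
open Real

lemma uniq_aux (c s t : ℝ) (hs : 1 ≤ s) (ht : 1 ≤ t)
    (h1 : s^4 + 2 * s^3 * c - 2*s - 1 = 0)
    (h2 : t^4 + 2 * t^3 * c - 2*t - 1 = 0) : s = t := by
  have key : t^3*(s^4 + 2*s^3*c - 2*s - 1) - s^3*(t^4 + 2*t^3*c - 2*t - 1) = 0 := by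
    rw [h1, h2]; ring
  rcases lt_trichotomy s t with h | h | h
  · exfalso
    nlinarith [mul_pos (mul_pos (show (0:ℝ) < s by linarith) (show (0:ℝ) < t by linarith)) (show (0:ℝ) < t - s by linarith), sq_nonneg (s*t), sq_nonneg (s+t), mul_pos (show (0:ℝ) < s^3*t^3 by positivity) (show (0:ℝ) < t - s by linarith)]
  · exact h
  · exfalso
    nlinarith [mul_pos (mul_pos (show (0:ℝ) < s by linarith) (show (0:ℝ) < t by linarith)) (show (0:ℝ) < s - t by linarith), sq_nonneg (s*t), sq_nonneg (s+t), mul_pos (show (0:ℝ) < s^3*t^3 by positivity) (show (0:ℝ) < s - t by linarith)]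

theorem unique_root_of_derivative_polynomial (α : ℝ) (hα : α ∈ Set.Ioc 0 (π/4)) :
    ∃! s : ℝ, s ∈ Set.Ici (1:ℝ) ∧
      s^4 + 2 * s^3 * Real.cos (4*α) - 2*s - 1 = 0 := by
  obtain ⟨hα0, hαπ⟩ := hα
  set c : ℝ := Real.cos (4*α) with hc
  have hc1 : c < 1 := by
    have h0 : (0:ℝ) ≤ 4*α := by linarith
    have hπ : 4*α ≤ π := by linarith
    have := Real.strictAntiOn_cos (a := 0) (b := 4*α)
      ⟨by linarith [Real.pi_pos], by linarith [Real.pi_pos]⟩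
      ⟨by linarith, hπ⟩ (by linarith)
    simpa [Real.cos_zero] using this
  have hcm1 : -1 ≤ c := Real.neg_one_le_cos _
  -- existence via IVT on [1,3]
  have hcont : Continuous (fun s : ℝ => s^4 + 2 * s^3 * c - 2*s - 1) := by
    continuity
  have hIVT := intermediate_value_Icc (by norm_num : (1:ℝ) ≤ 3) hcont.continuousOn
  have h0mem : (0:ℝ) ∈ Set.Icc ((1:ℝ)^4 + 2*(1:ℝ)^3*c - 2*1 - 1) ((3:ℝ)^4 + 2*(3:ℝ)^3*c - 2*3 - 1) := by
    constructor <;> nlinarith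
  obtain ⟨s, hsmem, hs0⟩ := hIVT h0mem
  refine ⟨s, ⟨hsmem.1, hs0⟩, ?_⟩
  rintro t ⟨ht, ht0⟩
  exact uniq_aux c t s ht hsmem.1 ht0 hs0
end
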